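/- Let G be a finite simple graph with n vertices and m edges. The F-index of the suspension K₁ + G (join of a single vertex with G) equals F(G) + 3M₁(G) + n³ + 6m + n. -/

import Mathlib

open Finset

/-- Degree of a vertex: the number of its neighbors. -/
noncomputable def degN {V : Type*} (G : SimpleGraph V) (v : V) : ℕ :=
  Nat.card (G.neighborSet v)

/-- F-index: the sum of cubes of the vertex degrees. -/
noncomputable def Findex {V : Type*} [Fintype V] (G : SimpleGraph V) : ℕ :=
  ∑ v, (degN G v) ^ 3

/-- First Zagreb index: the sum of squares of the vertex degrees. -/
noncomputable def zagrebM1 {V : Type*} [Fintype V] (G : SimpleGraph V) : ℕ :=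
  ∑ v, (degN G v) ^ 2

/-- Number of edges of a graph. -/
noncomputable def numEdges {V : Type*} (G : SimpleGraph V) : ℕ :=
  Nat.card G.edgeSet

/-- Join of two simple graphs: the disjoint union together with all edges
joining a vertex of the first graph to a vertex of the second. -/
def graphJoin {V₁ V₂ : Type*} (G₁ : SimpleGraph V₁) (G₂ : SimpleGraph V₂) :
    SimpleGraph (V₁ ⊕ V₂) where
  Adj x y :=
    match x, y with
    | .inl a, .inl b => G₁.Adj a b
    | .inr a, .inr b => G₂.Adj a b
    | _, _ => True
  symm := ⟨by rintro (a | a) (b | b) h <;> first | exact h.symm | trivial⟩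
  loopless := ⟨by
    rintro (a | a) h
    · exact G₁.loopless.irrefl a h
    · exact G₂.loopless.irrefl a h⟩

/-! In the suspension `K₁ + G` the apex has degree `n` and every `v` has degree `d_G(v) + 1`;
expanding `(d + 1)³` and using the handshake lemma `∑ d_G(v) = 2m` gives the formula. -/

section graphJoin

variable {V₁ V₂ : Type*} (G₁ : SimpleGraph V₁) (G₂ : SimpleGraph V₂)

def graphJoinNeighborSetInlEquiv (a : V₁) :
    G₁.neighborSet a ⊕ V₂ ≃ (graphJoin G₁ G₂).neighborSet (.inl a) where
  toFun
    | .inl ⟨b, h⟩ => ⟨.inl b, h⟩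
    | .inr w => ⟨.inr w, trivial⟩
  invFun
    | ⟨.inl b, h⟩ => .inl ⟨b, h⟩
    | ⟨.inr w, _⟩ => .inr w
  left_inv := by rintro (⟨b, h⟩ | w) <;> rfl
  right_inv := by rintro ⟨b | w, h⟩ <;> rfl

def graphJoinNeighborSetInrEquiv (v : V₂) :
    V₁ ⊕ G₂.neighborSet v ≃ (graphJoin G₁ G₂).neighborSet (.inr v) where
  toFun
    | .inl a => ⟨.inl a, trivial⟩
    | .inr ⟨w, h⟩ => ⟨.inr w, h⟩
  invFun
    | ⟨.inl a, _⟩ => .inl a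
    | ⟨.inr w, h⟩ => .inr ⟨w, h⟩
  left_inv := by rintro (a | ⟨w, h⟩) <;> rfl
  right_inv := by rintro ⟨a | w, h⟩ <;> rfl

variable [Finite V₁] [Finite V₂]

theorem degN_graphJoin_inl (a : V₁) :
    degN (graphJoin G₁ G₂) (.inl a) = degN G₁ a + Nat.card V₂ := by
  rw [degN, ← Nat.card_congr (graphJoinNeighborSetInlEquiv G₁ G₂ a), Nat.card_sum, degN]

theorem degN_graphJoin_inr (v : V₂) :
    degN (graphJoin G₁ G₂) (.inr v) = Nat.card V₁ + degN G₂ v := by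
  rw [degN, ← Nat.card_congr (graphJoinNeighborSetInrEquiv G₁ G₂ v), Nat.card_sum, degN]

end graphJoin

theorem degN_bot {V : Type*} (v : V) : degN (⊥ : SimpleGraph V) v = 0 := by
  rw [degN, SimpleGraph.neighborSet_bot, Nat.card_of_isEmpty]

theorem sum_degN_eq_two_mul_numEdges {V : Type*} [Fintype V] (G : SimpleGraph V) :
    ∑ v, degN G v = 2 * numEdges G := by
  classical
  have hdeg : ∀ v, degN G v = G.degree v := fun v => by
    rw [degN, Nat.card_eq_fintype_card, SimpleGraph.card_neighborSet_eq_degree]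
  simp_rw [hdeg]
  rw [SimpleGraph.sum_degrees_eq_twice_card_edges, numEdges, ← SimpleGraph.coe_edgeFinset,
    Nat.card_coe_set_eq, Set.ncard_coe_finset]

theorem sum_add_one_pow_three {ι : Type*} (s : Finset ι) (d : ι → ℕ) :
    ∑ i ∈ s, (d i + 1) ^ 3 =
      ∑ i ∈ s, d i ^ 3 + 3 * ∑ i ∈ s, d i ^ 2 + 3 * ∑ i ∈ s, d i + #s := by
  simp only [mul_sum, ← sum_add_distrib, card_eq_sum_ones]
  exact sum_congr rfl fun i _ => by ring

theorem Findex_suspension {V : Type*} [Fintype V] (G : SimpleGraph V)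
    (n m : ℕ) (hn : Fintype.card V = n) (hm : numEdges G = m) :
    Findex (graphJoin (⊥ : SimpleGraph (Fin 1)) G) =
      Findex G + 3 * zagrebM1 G + n ^ 3 + 6 * m + n := by
  have hapex (a : Fin 1) : degN (graphJoin (⊥ : SimpleGraph (Fin 1)) G) (.inl a) = n := by
    rw [degN_graphJoin_inl, degN_bot, Nat.card_eq_fintype_card, hn, zero_add]
  have hvertex (v : V) : degN (graphJoin (⊥ : SimpleGraph (Fin 1)) G) (.inr v) = degN G v + 1 := by
    rw [degN_graphJoin_inr, Nat.card_eq_fintype_card, Fintype.card_fin, add_comm]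
  rw [Findex, Fintype.sum_sum_type]
  simp only [hapex, hvertex, sum_add_one_pow_three, sum_degN_eq_two_mul_numEdges, hm,
    card_univ, hn, sum_const, Fintype.card_fin, one_smul, Findex, zagrebM1]
  ring
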